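/- Let α, β > 0, set x = √2·α/β, and let φ₂ = ((x/4)·(x + √(x² + 8)))^(1/4). Then V''(φ₂) = (β²/8)·√(x² + 8)·(3x − √(x² + 8)); in particular V''(φ₂) > 0 if and only if x > 1. -/

import Mathlib

/-!
At `u = φ⁴` the equation `V'(φ) = 0` reads `(u - 1)(β²u² - α²u - α²) = 0`, and `φ₂⁴` is the
positive root of the second factor (with `α² = x²β²/2`). The identity
`V''(φ) = (3/2)β²φ⁴ - (α² + β²) - 7 V'(φ)/φ` then gives `V''(φ₂) = (3/2)β²φ₂⁴ - (α² + β²)`,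
and `4φ₂⁴ = x² + x√(x²+8)` turns this into the claimed product, whose sign is that of
`3x - √(x²+8)`, positive exactly when `9x² > x² + 8`.
-/

/-- The potential `V` of the reduced Lichnerowicz ODE in the conformal gauge
`R̊ = α² + β²`. -/
noncomputable def V (α β φ : ℝ) : ℝ :=
  -((α ^ 2 + β ^ 2) / 16) * φ ^ 2 + (β ^ 2 / 48) * φ ^ 6 - (α ^ 2 / 48) / φ ^ 6

lemma hasDerivAt_const_div_pow (c : ℝ) (n : ℕ) {x : ℝ} (hx : x ≠ 0) :
    HasDerivAt (fun y : ℝ => c / y ^ n) (-(n * c) / x ^ (n + 1)) x := by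
  refine ((hasDerivAt_const x c).div (hasDerivAt_pow n x) (pow_ne_zero n hx)).congr_deriv ?_
  rcases n with _ | n
  · simp
  · rw [Nat.add_sub_cancel]
    field_simp
    ring

section Potential

variable (α β : ℝ) {φ : ℝ}

lemma hasDerivAt_V (hφ : φ ≠ 0) :
    HasDerivAt (V α β)
      (-((α ^ 2 + β ^ 2) / 8) * φ + β ^ 2 / 8 * φ ^ 5 + α ^ 2 / 8 / φ ^ 7) φ := by
  refine ((((hasDerivAt_pow 2 φ).const_mul (-((α ^ 2 + β ^ 2) / 16))).add
    ((hasDerivAt_pow 6 φ).const_mul (β ^ 2 / 48))).sub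
    (hasDerivAt_const_div_pow (α ^ 2 / 48) 6 hφ)).congr_deriv ?_
  push_cast
  ring

lemma deriv_V (hφ : φ ≠ 0) :
    deriv (V α β) φ = -((α ^ 2 + β ^ 2) / 8) * φ + β ^ 2 / 8 * φ ^ 5 + α ^ 2 / 8 / φ ^ 7 :=
  (hasDerivAt_V α β hφ).deriv

lemma eight_mul_pow_seven_mul_deriv_V (hφ : φ ≠ 0) :
    8 * φ ^ 7 * deriv (V α β) φ = (φ ^ 4 - 1) * (β ^ 2 * (φ ^ 4) ^ 2 - α ^ 2 * (φ ^ 4 + 1)) := by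
  rw [deriv_V α β hφ]
  field_simp
  ring

lemma deriv_V_eq_zero_of_pow_four_root (hφ : φ ≠ 0)
    (h : β ^ 2 * (φ ^ 4) ^ 2 = α ^ 2 * (φ ^ 4 + 1)) : deriv (V α β) φ = 0 := by
  have h8 := eight_mul_pow_seven_mul_deriv_V α β hφ
  rw [h, sub_self, mul_zero] at h8
  simpa [hφ] using h8

lemma deriv_deriv_V (hφ : φ ≠ 0) :
    deriv (deriv (V α β)) φ =
      3 / 2 * β ^ 2 * φ ^ 4 - (α ^ 2 + β ^ 2) - 7 * deriv (V α β) φ / φ := by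
  have hV' : HasDerivAt (deriv (V α β))
      (-((α ^ 2 + β ^ 2) / 8) + β ^ 2 / 8 * (5 * φ ^ 4) - 7 * (α ^ 2 / 8) / φ ^ 8) φ := by
    have hsum := (((hasDerivAt_id φ).const_mul (-((α ^ 2 + β ^ 2) / 8))).add
      ((hasDerivAt_pow 5 φ).const_mul (β ^ 2 / 8))).add
      (hasDerivAt_const_div_pow (α ^ 2 / 8) 7 hφ)
    refine (hsum.congr_of_eventuallyEq ?_).congr_deriv ?_
    · filter_upwards [eventually_ne_nhds hφ] with ψ hψ
      exact deriv_V α β hψ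
    · push_cast
      ring
  rw [hV'.deriv, deriv_V α β hφ]
  field_simp
  ring

lemma deriv_deriv_V_of_deriv_eq_zero (hφ : φ ≠ 0) (h : deriv (V α β) φ = 0) :
    deriv (deriv (V α β)) φ = 3 / 2 * β ^ 2 * φ ^ 4 - (α ^ 2 + β ^ 2) := by
  rw [deriv_deriv_V α β hφ, h, mul_zero, zero_div, sub_zero]

end Potential

lemma two_mul_sq_quarter_mul_add_sqrt (x : ℝ) :
    2 * (x / 4 * (x + √(x ^ 2 + 8))) ^ 2 = x ^ 2 * (x / 4 * (x + √(x ^ 2 + 8)) + 1) := by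
  linear_combination (x ^ 2 / 8) * Real.sq_sqrt (by positivity : (0 : ℝ) ≤ x ^ 2 + 8)

lemma sqrt_sq_add_eight_lt_three_mul_iff {x : ℝ} (hx : 0 < x) :
    √(x ^ 2 + 8) < 3 * x ↔ 1 < x := by
  rw [Real.sqrt_lt' (by positivity)]
  constructor <;> intro h <;> nlinarith

/-- `V''(φ₂) = (β²/8)·√(x²+8)·(3x − √(x²+8))`, which is positive
exactly when `x > 1`. -/
theorem stmt_8 (α β : ℝ) (hα : 0 < α) (hβ : 0 < β) (x φ₂ : ℝ)
    (hx : x = Real.sqrt 2 * α / β)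
    (hφ₂ : φ₂ = ((x / 4) * (x + Real.sqrt (x ^ 2 + 8))) ^ ((1 : ℝ) / 4)) :
    deriv (deriv (V α β)) φ₂
      = (β ^ 2 / 8) * Real.sqrt (x ^ 2 + 8) * (3 * x - Real.sqrt (x ^ 2 + 8)) ∧
    (0 < deriv (deriv (V α β)) φ₂ ↔ 1 < x) := by
  have hx0 : 0 < x := by rw [hx]; positivity
  have hα2 : α ^ 2 = x ^ 2 * β ^ 2 / 2 := by
    rw [hx, div_pow, mul_pow, Real.sq_sqrt zero_le_two]
    field_simp
  set s := √(x ^ 2 + 8)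
  have hs2 : s ^ 2 = x ^ 2 + 8 := Real.sq_sqrt (by positivity)
  have hu0 : 0 ≤ x / 4 * (x + s) := by positivity
  have hφ₂4 : φ₂ ^ 4 = x / 4 * (x + s) := by
    rw [hφ₂, one_div]
    exact_mod_cast Real.rpow_inv_natCast_pow hu0 (by norm_num : (4 : ℕ) ≠ 0)
  have hφ₂0 : φ₂ ≠ 0 := by rw [hφ₂]; exact (Real.rpow_pos_of_pos (by positivity) _).ne'
  have hcrit : deriv (V α β) φ₂ = 0 := by
    refine deriv_V_eq_zero_of_pow_four_root α β hφ₂0 ?_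
    rw [hα2, hφ₂4]
    linear_combination (β ^ 2 / 2) * two_mul_sq_quarter_mul_add_sqrt x
  have hV'' : deriv (deriv (V α β)) φ₂ = β ^ 2 / 8 * s * (3 * x - s) := by
    rw [deriv_deriv_V_of_deriv_eq_zero α β hφ₂0 hcrit, hφ₂4, hα2]
    linear_combination (β ^ 2 / 8) * hs2
  refine ⟨hV'', ?_⟩
  rw [hV'', mul_pos_iff_of_pos_left (by positivity), sub_pos,
    sqrt_sq_add_eight_lt_three_mul_iff hx0]
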